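/- arXiv:1601.03271 — 2 statements merged into one kernel-verified Lean document; each statement's English description precedes it below -/
import Mathlib

section
/- Let A = ⊕_{i∈1..n} A_i and B = ⊕_{j∈1..m} B_j be unions of μ-types, and suppose there exist functions f : {1..n} → {1..m} and g : {1..m} → {1..n} such that A_i ≈ B_{f(i)} for all i and A_{g(j)} ≈ B_j for all j. Then A ≈ B. -/
namespace CAP

/-- μ-types: variables, constants, compounds D @ A, functions A ⊃ B, unions A ⊕ B, recursive μV.A -/
inductive MuTy : Type
  | tvar : ℕ → MuTy
  | tconst : ℕ → MuTy
  | comp : MuTy → MuTy → MuTy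
  | arr : MuTy → MuTy → MuTy
  | union : MuTy → MuTy → MuTy
  | mu : ℕ → MuTy → MuTy
  deriving DecidableEq

namespace MuTy

/-- substitution of `B` for variable `V` -/
def subst (V : ℕ) (B : MuTy) : MuTy → MuTy
  | tvar n => if n = V then B else tvar n
  | tconst c => tconst c
  | comp A₁ A₂ => comp (subst V B A₁) (subst V B A₂)
  | arr A₁ A₂ => arr (subst V B A₁) (subst V B A₂)
  | union A₁ A₂ => union (subst V B A₁) (subst V B A₂)
  | mu W A => if W = V then mu W A else mu W (subst V B A)

/-- `V` occurs in the type only under `comp` or `arr` (if at all) -/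
def Guarded (V : ℕ) : MuTy → Prop
  | tvar n => n ≠ V
  | tconst _ => True
  | comp _ _ => True
  | arr _ _ => True
  | union A₁ A₂ => Guarded V A₁ ∧ Guarded V A₂
  | mu W A => W = V ∨ Guarded V A

/-- contractive μ-types -/
def Contractive : MuTy → Prop
  | tvar _ => True
  | tconst _ => True
  | comp A₁ A₂ => Contractive A₁ ∧ Contractive A₂
  | arr A₁ A₂ => Contractive A₁ ∧ Contractive A₂
  | union A₁ A₂ => Contractive A₁ ∧ Contractive A₂
  | mu V A => Guarded V A ∧ Contractive A

/-- free variables -/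
def fv : MuTy → Set ℕ
  | tvar n => {n}
  | tconst _ => ∅
  | comp A₁ A₂ => fv A₁ ∪ fv A₂
  | arr A₁ A₂ => fv A₁ ∪ fv A₂
  | union A₁ A₂ => fv A₁ ∪ fv A₂
  | mu V A => fv A \ {V}

/-- number of consecutive μ binders at the root -/
def headMu : MuTy → ℕ
  | mu _ A => headMu A + 1
  | _ => 0

end MuTy

/-- inductive μ-type equivalence ≈ -/
inductive MuEq : MuTy → MuTy → Prop
  | refl (A) : MuEq A A
  | trans : MuEq A B → MuEq B C → MuEq A C
  | symm : MuEq A B → MuEq B A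
  | arrCong : MuEq A A' → MuEq B B' → MuEq (.arr A B) (.arr A' B')
  | compCong : MuEq D D' → MuEq A A' → MuEq (.comp D A) (.comp D' A')
  | unionIdem (A) : MuEq (.union A A) A
  | unionComm (A B) : MuEq (.union A B) (.union B A)
  | unionAssoc (A B C) : MuEq (.union A (.union B C)) (.union (.union A B) C)
  | unionCong : MuEq A A' → MuEq B B' → MuEq (.union A B) (.union A' B')
  | muCong : MuEq A B → MuEq (.mu V A) (.mu V B)
  | fold (V A) : MuEq (.mu V A) (MuTy.subst V (.mu V A) A)
  | contr : MuEq A (MuTy.subst V A B) → (MuTy.mu V B).Contractive → MuEq A (.mu V B)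

/-- inductive μ-type subtyping, with a context of variable assumptions -/
inductive MuLe : Set (ℕ × ℕ) → MuTy → MuTy → Prop
  | refl (S A) : MuLe S A A
  | hyp : (V, W) ∈ S → MuLe S (.tvar V) (.tvar W)
  | eq : MuEq A B → MuLe S A B
  | trans : MuLe S A B → MuLe S B C → MuLe S A C
  | compCong : MuLe S D D' → MuLe S A A' → MuLe S (.comp D A) (.comp D' A')
  | func : MuLe S A' A → MuLe S B B' → MuLe S (.arr A B) (.arr A' B')
  | unionL : MuLe S A C → MuLe S B C → MuLe S (.union A B) C
  | unionR1 : MuLe S A B → MuLe S A (.union B C)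
  | unionR2 : MuLe S A C → MuLe S A (.union B C)
  | recRule : MuLe (insert (V, W) S) A B → W ∉ A.fv → V ∉ B.fv →
      MuLe S (.mu V A) (.mu W B)

/-- binary association trees of unions, used to express n-fold unions with arbitrary association -/
inductive UTree : Type
  | leaf : MuTy → UTree
  | node : UTree → UTree → UTree

def UTree.toTy : UTree → MuTy
  | .leaf A => A
  | .node l r => .union l.toTy r.toTy

def UTree.leaves : UTree → List MuTy
  | .leaf A => [A]
  | .node l r => l.leaves ++ r.leaves

/-! ## Infinite types as trees -/

inductive Atom : Type
  | var : ℕ → Atom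
  | const : ℕ → Atom
  | bullet : Atom
  deriving DecidableEq

inductive Lab : Type
  | atom : Atom → Lab
  | comp : Lab
  | arr : Lab
  | union : Lab
  deriving DecidableEq

def Lab.IsBinary : Lab → Prop
  | .comp => True
  | .arr => True
  | .union => True
  | .atom _ => False

/-- possibly infinite trees: partial labelling of positions -/
abbrev ITree : Type := List Bool → Option Lab

namespace ITree

def child (A : ITree) (b : Bool) : ITree := fun π => A (b :: π)

/-- well-formed infinite types: rooted, prefix-closed with binary branching,
and no infinite branch consisting solely of ⊕ -/
def Wf (A : ITree) : Prop :=
  (A []).isSome ∧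
  (∀ π b, (A (π ++ [b])).isSome ↔ ∃ l, A π = some l ∧ l.IsBinary) ∧
  (∀ (π : List Bool) (f : ℕ → Bool), ∃ n, A (π ++ (List.range n).map f) ≠ some Lab.union)

end ITree

/-- maximal union decomposition: the list of non-union components of a tree -/
inductive UnionComps : ITree → List ITree → Prop
  | nonUnion (A : ITree) : A [] ≠ some Lab.union → UnionComps A [A]
  | union (A : ITree) (l r : List ITree) :
      A [] = some Lab.union →
      UnionComps (A.child false) l → UnionComps (A.child true) r →
      UnionComps A (l ++ r)

/-- the rule functional for coinductive tree equivalence -/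
def EqF (R : ITree → ITree → Prop) (A B : ITree) : Prop :=
  (∃ a : Atom, A [] = some (Lab.atom a) ∧ B [] = some (Lab.atom a)) ∨
  (A [] = some Lab.comp ∧ B [] = some Lab.comp ∧
    R (A.child false) (B.child false) ∧ R (A.child true) (B.child true)) ∨
  (A [] = some Lab.arr ∧ B [] = some Lab.arr ∧
    R (A.child false) (B.child false) ∧ R (A.child true) (B.child true)) ∨
  (∃ (la lb : List ITree), UnionComps A la ∧ UnionComps B lb ∧
    2 < la.length + lb.length ∧
    (∃ f : Fin la.length → Fin lb.length, ∀ i, R (la.get i) (lb.get (f i))) ∧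
    (∃ g : Fin lb.length → Fin la.length, ∀ j, R (la.get (g j)) (lb.get j)))

/-- coinductive tree equivalence ≈_T : the greatest fixed point of `EqF` -/
def TreeEq (A B : ITree) : Prop :=
  ∃ R : ITree → ITree → Prop, (∀ X Y, R X Y → EqF R X Y) ∧ R A B

/-- the rule functional for coinductive tree subtyping -/
def LeF (R : ITree → ITree → Prop) (A B : ITree) : Prop :=
  (∃ a : Atom, A [] = some (Lab.atom a) ∧ B [] = some (Lab.atom a)) ∨
  (A [] = some Lab.comp ∧ B [] = some Lab.comp ∧
    R (A.child false) (B.child false) ∧ R (A.child true) (B.child true)) ∨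
  (A [] = some Lab.arr ∧ B [] = some Lab.arr ∧
    R (B.child false) (A.child false) ∧ R (A.child true) (B.child true)) ∨
  (∃ (la lb : List ITree), UnionComps A la ∧ UnionComps B lb ∧
    2 < la.length + lb.length ∧
    (∃ f : Fin la.length → Fin lb.length, ∀ i, R (la.get i) (lb.get (f i))))

/-- coinductive tree subtyping ≤_T : the greatest fixed point of `LeF` -/
def TreeLe (A B : ITree) : Prop :=
  ∃ R : ITree → ITree → Prop, (∀ X Y, R X Y → LeF R X Y) ∧ R A B

open Classical in
/-- tree substitution of tree `B` for the variable `V` -/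
noncomputable def substT (V : ℕ) (B A : ITree) : ITree := fun π =>
  if h : ∃ ps : List Bool × List Bool,
      π = ps.1 ++ ps.2 ∧ A ps.1 = some (Lab.atom (Atom.var V))
  then B (Classical.choose h).2
  else A π

/-- the single-node tree consisting of an atom -/
def atomTree (a : Atom) : ITree := fun π => if π = [] then some (Lab.atom a) else none

/-- a tree with binary root label `l` and subtrees `A₁`, `A₂` -/
def binTree (l : Lab) (A₁ A₂ : ITree) : ITree := fun π =>
  match π with
  | [] => some l
  | false :: π' => A₁ π'
  | true :: π' => A₂ π'

/-- effective depth of a position: union nodes do not consume depth -/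
def edepth (A : ITree) : List Bool → ℕ
  | [] => 0
  | b :: π => (if A [] = some Lab.union then 0 else 1) + edepth (A.child b) π

open Classical in
/-- truncation of a tree at depth `k`; cut points are replaced by the constant • -/
noncomputable def cut (k : ℕ) (A : ITree) : ITree := fun π =>
  if ∀ p, p <+: π → p ≠ π → edepth A p < k then
    (if edepth A π < k then A π
     else if (A π).isSome then some (Lab.atom Atom.bullet) else none)
  else none

/-- labels of the tree interpretation of a μ-type (μ is unfolded completely) -/
inductive HasLab : MuTy → List Bool → Lab → Prop
  | tvar (n) : HasLab (.tvar n) [] (.atom (.var n))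
  | tconst (c) : HasLab (.tconst c) [] (.atom (.const c))
  | compRoot (A B) : HasLab (.comp A B) [] .comp
  | compL : HasLab A π l → HasLab (.comp A B) (false :: π) l
  | compR : HasLab B π l → HasLab (.comp A B) (true :: π) l
  | arrRoot (A B) : HasLab (.arr A B) [] .arr
  | arrL : HasLab A π l → HasLab (.arr A B) (false :: π) l
  | arrR : HasLab B π l → HasLab (.arr A B) (true :: π) l
  | unionRoot (A B) : HasLab (.union A B) [] .union
  | unionL : HasLab A π l → HasLab (.union A B) (false :: π) l
  | unionR : HasLab B π l → HasLab (.union A B) (true :: π) l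
  | mu : HasLab (MuTy.subst V (.mu V A) A) π l → HasLab (.mu V A) π l

open Classical in
/-- the tree interpretation ⟦·⟧ of μ-types -/
noncomputable def interp (A : MuTy) : ITree := fun π =>
  if h : ∃ l, HasLab A π l then some (Classical.choose h) else none

/-- application of a parallel substitution to a μ-type -/
def applyS (σ : ℕ → MuTy) : MuTy → MuTy
  | .tvar n => σ n
  | .tconst c => .tconst c
  | .comp A B => .comp (applyS σ A) (applyS σ B)
  | .arr A B => .arr (applyS σ A) (applyS σ B)
  | .union A B => .union (applyS σ A) (applyS σ B)
  | .mu V A => .mu V (applyS (Function.update σ V (.tvar V)) A)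

/-- outermost type constructor (head μ binders are unfolded/skipped) -/
inductive HeadC : Type
  | hvar : ℕ → HeadC
  | hconst : ℕ → HeadC
  | hcomp : HeadC
  | harr : HeadC
  | hunion : HeadC
  deriving DecidableEq

def headOf : MuTy → HeadC
  | .tvar n => .hvar n
  | .tconst c => .hconst c
  | .comp _ _ => .hcomp
  | .arr _ _ => .harr
  | .union _ _ => .hunion
  | .mu _ A => headOf A

/-- non-union μ-types: after unfolding head μ binders the top constructor is not ⊕ -/
def NonUnion : MuTy → Prop
  | .union _ _ => False
  | .mu _ A => NonUnion A
  | _ => True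

/-- union contexts U ::= □ | U ⊕ A | A ⊕ U -/
inductive UCtx : Type
  | hole : UCtx
  | left : UCtx → MuTy → UCtx
  | right : MuTy → UCtx → UCtx

def UCtx.fill : UCtx → MuTy → MuTy
  | .hole, A => A
  | .left U B, A => .union (U.fill A) B
  | .right B U, A => .union B (U.fill A)

end CAP

/-!
Modulo `≈`, union is an idempotent, commutative and associative operation compatible
with `≈`, i.e. a join. Hence `X ≤ Y :⇔ X ⊕ Y ≈ Y` is a preorder in which a union is the
least upper bound of its summands, and `X ≤ Y ≤ X` forces `X ≈ Y`. The map `f` shows that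
every summand of `A` is `≈` to a summand of `B`, so `A ≤ B`; symmetrically `g` gives `B ≤ A`.
-/

namespace CAP

def UnionLe (X Y : MuTy) : Prop := MuEq (.union X Y) Y

namespace UnionLe

theorem refl (X : MuTy) : UnionLe X X := MuEq.unionIdem X

theorem of_muEq_left {X X' Y : MuTy} (hX : MuEq X X') (h : UnionLe X Y) : UnionLe X' Y :=
  (hX.symm.unionCong (.refl Y)).trans h

theorem union_right_left {X Y : MuTy} (Z : MuTy) (h : UnionLe X Y) : UnionLe X (.union Y Z) :=
  (MuEq.unionAssoc X Y Z).trans (h.unionCong (.refl Z))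

theorem union_right_right {X Z : MuTy} (Y : MuTy) (h : UnionLe X Z) : UnionLe X (.union Y Z) :=
  ((MuEq.refl X).unionCong (.unionComm Y Z)).trans <|
    (MuEq.unionAssoc X Z Y).trans <| (h.unionCong (.refl Y)).trans (.unionComm Z Y)

theorem union_left {X Y T : MuTy} (hX : UnionLe X T) (hY : UnionLe Y T) :
    UnionLe (.union X Y) T :=
  (MuEq.unionAssoc X Y T).symm.trans (((MuEq.refl X).unionCong hY).trans hX)

theorem antisymm {X Y : MuTy} (h : UnionLe X Y) (h' : UnionLe Y X) : MuEq X Y :=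
  (h'.symm.trans (.unionComm Y X)).trans h

end UnionLe

namespace UTree

theorem unionLe_toTy_of_mem {X : MuTy} : ∀ {t : UTree}, X ∈ t.leaves → UnionLe X t.toTy
  | .leaf _, h => by
    rw [leaves, List.mem_singleton] at h
    exact h ▸ .refl X
  | .node _ _, h => by
    rcases List.mem_append.mp h with hl | hr
    · exact (unionLe_toTy_of_mem hl).union_right_left _
    · exact (unionLe_toTy_of_mem hr).union_right_right _

theorem toTy_unionLe {T : MuTy} :
    ∀ {s : UTree}, (∀ X ∈ s.leaves, UnionLe X T) → UnionLe s.toTy T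
  | .leaf X, h => h X (List.mem_singleton_self X)
  | .node _ _, h =>
    .union_left (toTy_unionLe fun X hX => h X (List.mem_append_left _ hX))
      (toTy_unionLe fun X hX => h X (List.mem_append_right _ hX))

theorem toTy_unionLe_toTy {s t : UTree} (h : ∀ X ∈ s.leaves, ∃ Y ∈ t.leaves, MuEq X Y) :
    UnionLe s.toTy t.toTy :=
  toTy_unionLe fun X hX =>
    let ⟨_, hY, hXY⟩ := h X hX
    (unionLe_toTy_of_mem hY).of_muEq_left hXY.symm

end UTree

/-- if there are f and g matching the summands of two unions up to ≈ in
both directions, then the unions are equivalent. -/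
theorem stmt3 (n m : ℕ) (A : Fin n → MuTy) (B : Fin m → MuTy)
    (f : Fin n → Fin m) (g : Fin m → Fin n)
    (hf : ∀ i, MuEq (A i) (B (f i))) (hg : ∀ j, MuEq (A (g j)) (B j))
    (tA tB : UTree) (hA : tA.leaves = List.ofFn A) (hB : tB.leaves = List.ofFn B) :
    MuEq tA.toTy tB.toTy := by
  refine UnionLe.antisymm (UTree.toTy_unionLe_toTy ?_) (UTree.toTy_unionLe_toTy ?_)
  · rintro _ hX
    obtain ⟨i, rfl⟩ := List.mem_ofFn.mp (hA ▸ hX)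
    exact ⟨B (f i), hB ▸ List.mem_ofFn.mpr ⟨f i, rfl⟩, hf i⟩
  · rintro _ hY
    obtain ⟨j, rfl⟩ := List.mem_ofFn.mp (hB ▸ hY)
    exact ⟨A (g j), hA ▸ List.mem_ofFn.mpr ⟨g j, rfl⟩, (hg j).symm⟩

end CAP
end

section
/- The coinductively defined equivalence relation ≈_T on possibly infinite types (trees over atoms, @, ⊃, and the union connector ⊕) is an equivalence relation: it is reflexive, symmetric, and transitive. -/
namespace CAP

/-!
Symmetry and transitivity are proved by coinduction, with `flip (≈_T)` and `(≈_T) ∘ (≈_T)` as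
post-fixed points. For transitivity, unions are compared through their maximal components, so
whenever `A` or `C` is a union the component matchings `A → B → C` simply compose; when both are
non-unions, some non-union component of `B` links them and the structural rules compose.
Reflexivity needs well-formedness: since no infinite branch consists only of ⊕, every tree has a
maximal union decomposition.
-/

open Relation

theorem exists_forall_range_map_of_extend {α : Type*} {P : List α → Prop} (h₀ : P [])
    (extend : ∀ p, P p → ∃ a, P (p ++ [a])) : ∃ f : ℕ → α, ∀ n, P ((List.range n).map f) := by
  choose step hstep using extend
  let path : ℕ → {p // P p} := fun n =>
    Nat.rec ⟨[], h₀⟩ (fun _ p => ⟨p.1 ++ [step p.1 p.2], hstep p.1 p.2⟩) n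
  refine ⟨fun n => step (path n).1 (path n).2, fun n => ?_⟩
  suffices (List.range n).map (fun n => step (path n).1 (path n).2) = (path n).1 from
    this ▸ (path n).2
  induction n with
  | zero => rfl
  | succ n ih => rw [List.range_succ, List.map_append, ih]; rfl

namespace ITree

def subtree (A : ITree) (p : List Bool) : ITree := fun π => A (p ++ π)

@[simp] lemma subtree_nil (A : ITree) : A.subtree [] = A := rfl

@[simp] lemma subtree_apply_nil (A : ITree) (p : List Bool) : A.subtree p [] = A p := by
  simp [subtree]

@[simp] lemma child_subtree (A : ITree) (p : List Bool) (b : Bool) :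
    (A.subtree p).child b = A.subtree (p ++ [b]) := by
  funext π
  simp [subtree, child]

lemma Wf.child {A : ITree} (hA : A.Wf) {l : Lab} (hl : A [] = some l) (hb : l.IsBinary)
    (b : Bool) : (A.child b).Wf := by
  obtain ⟨-, hbranch, hunion⟩ := hA
  refine ⟨?_, fun π b' => ?_, fun π f => ?_⟩
  · simpa [ITree.child] using (hbranch [] b).mpr ⟨l, hl, hb⟩
  · simpa [ITree.child] using hbranch (b :: π) b'
  · simpa [ITree.child] using hunion (b :: π) f

end ITree

namespace UnionComps

variable {A : ITree} {l : List ITree}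

lemma ne_nil (h : UnionComps A l) : l ≠ [] := by
  induction h with
  | nonUnion => simp
  | union _ _ _ _ _ _ ihl => simp [ihl]

lemma unique {l' : List ITree} (h : UnionComps A l) (h' : UnionComps A l') : l = l' := by
  induction h generalizing l' with
  | nonUnion A hA =>
    cases h' with
    | nonUnion => rfl
    | union _ _ _ hu => exact absurd hu hA
  | union A l r hA _ _ ihl ihr =>
    cases h' with
    | nonUnion _ hA' => exact absurd hA hA'
    | union _ _ _ _ hl hr => rw [ihl hl, ihr hr]

lemma eq_singleton_of_nonUnion (h : UnionComps A l) (hA : A [] ≠ some Lab.union) : l = [A] :=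
  h.unique (.nonUnion A hA)

lemma eq_singleton_of_length_le_one (h : UnionComps A l) (hl : l.length ≤ 1) :
    l = [A] ∧ A [] ≠ some Lab.union := by
  cases h with
  | nonUnion _ hA => exact ⟨rfl, hA⟩
  | union _ l r _ hl' hr' =>
    have := List.length_pos_iff.mpr hl'.ne_nil
    have := List.length_pos_iff.mpr hr'.ne_nil
    simp only [List.length_append] at hl
    omega

lemma nonUnion_of_mem (h : UnionComps A l) {X : ITree} (hX : X ∈ l) :
    X [] ≠ some Lab.union := by
  induction h with
  | nonUnion A hA => rwa [List.mem_singleton.mp hX]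
  | union _ _ _ _ _ _ ihl ihr => exact (List.mem_append.mp hX).elim ihl ihr

lemma wf_of_mem (h : UnionComps A l) (hA : A.Wf) {X : ITree} (hX : X ∈ l) : X.Wf := by
  induction h with
  | nonUnion A _ => rwa [List.mem_singleton.mp hX]
  | union A _ _ hu _ _ ihl ihr =>
    exact (List.mem_append.mp hX).elim (ihl (hA.child hu trivial false))
      (ihr (hA.child hu trivial true))

end UnionComps

lemma root_union_of_not_exists_unionComps {A : ITree} (hA : ¬∃ l, UnionComps A l) :
    A [] = some Lab.union ∧ ∃ b, ¬∃ l, UnionComps (A.child b) l := by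
  have hu : A [] = some Lab.union := by
    by_contra hu
    exact hA ⟨[A], .nonUnion A hu⟩
  refine ⟨hu, ?_⟩
  by_contra! hchild
  obtain ⟨l, hl⟩ := hchild false
  obtain ⟨r, hr⟩ := hchild true
  exact hA ⟨l ++ r, .union A l r hu hl hr⟩

/-- Without a decomposition, one could descend forever through ⊕ nodes. -/
lemma ITree.Wf.exists_unionComps {A : ITree} (hA : A.Wf) : ∃ l, UnionComps A l := by
  by_contra hA'
  obtain ⟨f, hf⟩ := exists_forall_range_map_of_extend
    (P := fun p => ¬∃ l, UnionComps (A.subtree p) l) (by simpa using hA')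
    (fun p hp => by simpa using (root_union_of_not_exists_unionComps hp).2)
  obtain ⟨n, hn⟩ := hA.2.2 [] f
  exact hn (by simpa using (root_union_of_not_exists_unionComps (hf n)).1)

section BiTotalOn

variable {α β γ : Type*} {r : α → β → Prop} {la : List α} {lb : List β}

def BiTotalOn (r : α → β → Prop) (la : List α) (lb : List β) : Prop :=
  (∀ x ∈ la, ∃ y ∈ lb, r x y) ∧ ∀ y ∈ lb, ∃ x ∈ la, r x y

lemma exists_fin_get_iff :
    (∃ f : Fin la.length → Fin lb.length, ∀ i, r (la.get i) (lb.get (f i))) ↔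
      ∀ x ∈ la, ∃ y ∈ lb, r x y := by
  constructor
  · rintro ⟨f, hf⟩ x hx
    obtain ⟨i, rfl⟩ := List.get_of_mem hx
    exact ⟨_, List.get_mem _ _, hf i⟩
  · intro h
    choose y hy hxy using fun i : Fin la.length => h _ (List.get_mem la i)
    choose j hj using fun i => List.get_of_mem (hy i)
    exact ⟨j, fun i => (hj i).symm ▸ hxy i⟩

lemma BiTotalOn.flip (h : BiTotalOn r la lb) : BiTotalOn (flip r) lb la :=
  ⟨h.2, h.1⟩

lemma BiTotalOn.comp {p : β → γ → Prop} {lc : List γ} (h₁ : BiTotalOn r la lb)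
    (h₂ : BiTotalOn p lb lc) : BiTotalOn (Comp r p) la lc := by
  refine ⟨fun x hx => ?_, fun z hz => ?_⟩
  · obtain ⟨y, hy, hxy⟩ := h₁.1 x hx
    obtain ⟨z, hz, hyz⟩ := h₂.1 y hy
    exact ⟨z, hz, y, hxy, hyz⟩
  · obtain ⟨y, hy, hyz⟩ := h₂.2 z hz
    obtain ⟨x, hx, hxy⟩ := h₁.2 y hy
    exact ⟨x, hx, y, hxy, hyz⟩

lemma biTotalOn_self {s : α → α → Prop} {l : List α} (h : ∀ x ∈ l, s x x) : BiTotalOn s l l :=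
  ⟨fun x hx => ⟨x, hx, h x hx⟩, fun x hx => ⟨x, hx, h x hx⟩⟩

lemma biTotalOn_singleton {x : α} {y : β} : BiTotalOn r [x] [y] ↔ r x y := by
  simp [BiTotalOn]

end BiTotalOn

section Rules

variable {R S : ITree → ITree → Prop}

/-- The rules of `EqF` for atoms, `@` and `⊃`. -/
def StructF (R : ITree → ITree → Prop) (A B : ITree) : Prop :=
  (∃ a : Atom, A [] = some (Lab.atom a) ∧ B [] = some (Lab.atom a)) ∨
  (A [] = some Lab.comp ∧ B [] = some Lab.comp ∧
    R (A.child false) (B.child false) ∧ R (A.child true) (B.child true)) ∨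
  (A [] = some Lab.arr ∧ B [] = some Lab.arr ∧
    R (A.child false) (B.child false) ∧ R (A.child true) (B.child true))

def UnionF (R : ITree → ITree → Prop) (A B : ITree) : Prop :=
  ∃ la lb, UnionComps A la ∧ UnionComps B lb ∧ 2 < la.length + lb.length ∧ BiTotalOn R la lb

lemma eqF_iff {A B : ITree} : EqF R A B ↔ StructF R A B ∨ UnionF R A B := by
  simp only [EqF, StructF, UnionF, BiTotalOn, exists_fin_get_iff,
    exists_fin_get_iff (r := fun y x => R x y), or_assoc]

lemma StructF.root_ne_union {A B : ITree} (h : StructF R A B) :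
    A [] ≠ some Lab.union ∧ B [] ≠ some Lab.union := by
  rcases h with ⟨a, hA, hB⟩ | ⟨hA, hB, -⟩ | ⟨hA, hB, -⟩ <;> simp [hA, hB]

lemma StructF.flip {A B : ITree} (h : StructF R A B) : StructF (flip R) B A := by
  rcases h with ⟨a, hA, hB⟩ | ⟨hA, hB, hl, hr⟩ | ⟨hA, hB, hl, hr⟩
  · exact Or.inl ⟨a, hB, hA⟩
  · exact Or.inr (Or.inl ⟨hB, hA, hl, hr⟩)
  · exact Or.inr (Or.inr ⟨hB, hA, hl, hr⟩)

lemma StructF.comp {A B C : ITree} (h₁ : StructF R A B) (h₂ : StructF S B C) :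
    StructF (Comp R S) A C := by
  rcases h₁ with ⟨a, hA, hB⟩ | ⟨hA, hB, hl, hr⟩ | ⟨hA, hB, hl, hr⟩ <;>
  rcases h₂ with ⟨b, hB', hC⟩ | ⟨hB', hC, hl', hr'⟩ | ⟨hB', hC, hl', hr'⟩ <;>
  rw [hB] at hB' <;> cases hB'
  · exact Or.inl ⟨a, hA, hC⟩
  · exact Or.inr (Or.inl ⟨hA, hC, ⟨_, hl, hl'⟩, ⟨_, hr, hr'⟩⟩)
  · exact Or.inr (Or.inr ⟨hA, hC, ⟨_, hl, hl'⟩, ⟨_, hr, hr'⟩⟩)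

lemma EqF.flip {A B : ITree} (h : EqF R A B) : EqF (flip R) B A := by
  rcases eqF_iff.mp h with h | ⟨la, lb, hla, hlb, hlen, hm⟩
  · exact eqF_iff.mpr (Or.inl h.flip)
  · exact eqF_iff.mpr (Or.inr ⟨lb, la, hlb, hla, by omega, hm.flip⟩)

lemma EqF.mono {A B : ITree} (hRS : ∀ X Y, R X Y → S X Y) (h : EqF R A B) : EqF S A B := by
  rcases h with h | ⟨hA, hB, hl, hr⟩ | ⟨hA, hB, hl, hr⟩ | ⟨la, lb, hla, hlb, hlen, ⟨f, hf⟩, ⟨g, hg⟩⟩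
  · exact Or.inl h
  · exact Or.inr (Or.inl ⟨hA, hB, hRS _ _ hl, hRS _ _ hr⟩)
  · exact Or.inr (Or.inr (Or.inl ⟨hA, hB, hRS _ _ hl, hRS _ _ hr⟩))
  · exact Or.inr (Or.inr (Or.inr ⟨la, lb, hla, hlb, hlen,
      ⟨f, fun i => hRS _ _ (hf i)⟩, ⟨g, fun j => hRS _ _ (hg j)⟩⟩))

lemma EqF.exists_unionComps {A B : ITree} (h : EqF R A B) :
    (∃ la, UnionComps A la) ∧ ∃ lb, UnionComps B lb := by
  rcases eqF_iff.mp h with h | ⟨la, lb, hla, hlb, -⟩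
  · exact ⟨⟨[A], .nonUnion A h.root_ne_union.1⟩, ⟨[B], .nonUnion B h.root_ne_union.2⟩⟩
  · exact ⟨⟨la, hla⟩, ⟨lb, hlb⟩⟩

end Rules

namespace TreeEq

variable {A B C : ITree}

lemma unfold (h : TreeEq A B) : EqF TreeEq A B := by
  obtain ⟨R, hR, hAB⟩ := h
  exact (hR A B hAB).mono fun X Y hXY => ⟨R, hR, hXY⟩

lemma structF (h : TreeEq A B) (hA : A [] ≠ some Lab.union) (hB : B [] ≠ some Lab.union) :
    StructF TreeEq A B := by
  refine (eqF_iff.mp h.unfold).resolve_right ?_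
  rintro ⟨la, lb, hla, hlb, hlen, -⟩
  rw [hla.eq_singleton_of_nonUnion hA, hlb.eq_singleton_of_nonUnion hB] at hlen
  simp at hlen

lemma biTotalOn {la lb : List ITree} (h : TreeEq A B) (hla : UnionComps A la)
    (hlb : UnionComps B lb) : BiTotalOn TreeEq la lb := by
  rcases eqF_iff.mp h.unfold with hs | ⟨la', lb', hla', hlb', -, hm⟩
  · rw [hla.eq_singleton_of_nonUnion hs.root_ne_union.1,
      hlb.eq_singleton_of_nonUnion hs.root_ne_union.2, biTotalOn_singleton]
    exact h
  · rwa [hla.unique hla', hlb.unique hlb']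

lemma refl (hA : A.Wf) : TreeEq A A := by
  refine ⟨fun X Y => X = Y ∧ X.Wf, ?_, rfl, hA⟩
  rintro X _ ⟨rfl, hX⟩
  obtain ⟨lab, hlab⟩ := Option.isSome_iff_exists.mp hX.1
  cases lab with
  | atom a => exact Or.inl ⟨a, hlab, hlab⟩
  | comp =>
    exact Or.inr (Or.inl ⟨hlab, hlab, ⟨rfl, hX.child hlab trivial false⟩,
      ⟨rfl, hX.child hlab trivial true⟩⟩)
  | arr =>
    exact Or.inr (Or.inr (Or.inl ⟨hlab, hlab, ⟨rfl, hX.child hlab trivial false⟩,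
      ⟨rfl, hX.child hlab trivial true⟩⟩))
  | union =>
    obtain ⟨l, hl⟩ := hX.exists_unionComps
    have hlen : 1 < l.length := by
      by_contra! hlen
      exact (hl.eq_singleton_of_length_le_one hlen).2 hlab
    exact eqF_iff.mpr (Or.inr ⟨l, l, hl, hl, by omega,
      biTotalOn_self fun Y hY => ⟨rfl, hl.wf_of_mem hX hY⟩⟩)

lemma symm (h : TreeEq A B) : TreeEq B A :=
  ⟨flip TreeEq, fun _ _ hXY => hXY.unfold.flip, h⟩

lemma trans (hAB : TreeEq A B) (hBC : TreeEq B C) : TreeEq A C := by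
  refine ⟨Comp TreeEq TreeEq, ?_, B, hAB, hBC⟩
  rintro X Z ⟨Y, hXY, hYZ⟩
  obtain ⟨⟨la, hla⟩, lb, hlb⟩ := hXY.unfold.exists_unionComps
  obtain ⟨-, lc, hlc⟩ := hYZ.unfold.exists_unionComps
  have hab := hXY.biTotalOn hla hlb
  have hbc := hYZ.biTotalOn hlb hlc
  by_cases hlen : 2 < la.length + lc.length
  · exact eqF_iff.mpr (Or.inr ⟨la, lc, hla, hlc, hlen, hab.comp hbc⟩)
  have hla_pos := List.length_pos_iff.mpr hla.ne_nil
  have hlc_pos := List.length_pos_iff.mpr hlc.ne_nil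
  obtain ⟨rfl, hX⟩ := hla.eq_singleton_of_length_le_one (by omega)
  obtain ⟨rfl, hZ⟩ := hlc.eq_singleton_of_length_le_one (by omega)
  obtain ⟨W, hW, hXW⟩ := hab.1 X (List.mem_singleton_self X)
  obtain ⟨Z', hZ', hWZ⟩ := hbc.1 W hW
  rw [List.mem_singleton.mp hZ'] at hWZ
  have hWu := hlb.nonUnion_of_mem hW
  exact eqF_iff.mpr (Or.inl ((hXW.structF hX hWu).comp (hWZ.structF hWu hZ)))

end TreeEq

/-- coinductive tree equivalence ≈_T is an equivalence relation on
well-formed infinite types. -/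
theorem stmt4 :
    (∀ A : ITree, A.Wf → TreeEq A A) ∧
    (∀ A B : ITree, A.Wf → B.Wf → TreeEq A B → TreeEq B A) ∧
    (∀ A B C : ITree, A.Wf → B.Wf → C.Wf → TreeEq A B → TreeEq B C → TreeEq A C) :=
  ⟨fun _ hA => .refl hA, fun _ _ _ _ h => h.symm, fun _ _ _ _ _ _ h₁ h₂ => h₁.trans h₂⟩

end CAP
end
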